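/- arXiv:1205.6128 — 2 statements merged into one kernel-verified Lean document; each statement's English description precedes it below -/
import Mathlib

section
/- For a ≥ 1 and any partition λ with a + |λ| = n, one has ⟨C_a s_λ, e_n⟩ = 1 if a = 1 and λ = (1^{n-1}), and 0 otherwise. -/
open MvPolynomial

noncomputable section

/-- The coefficient field `ℚ(q,t)`. -/
abbrev F : Type := FractionRing (MvPolynomial (Fin 2) ℚ)

def q : F := algebraMap (MvPolynomial (Fin 2) ℚ) F (X 0)
def t : F := algebraMap (MvPolynomial (Fin 2) ℚ) F (X 1)

/-- The ring of symmetric functions over `ℚ(q,t)`, presented as the polynomial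
ring in the power sums `p₁, p₂, …`; the variable `i` represents `p_{i+1}`. -/
abbrev SymF : Type := MvPolynomial ℕ F

/-- The power sum `p_k` (for `k ≥ 1`). -/
def pSym (k : ℕ) : SymF := X (k - 1)

/-- `p_μ = p_{μ₁} ⋯ p_{μ_k}`. -/
def pProd {n : ℕ} (μ : n.Partition) : SymF := (μ.parts.map pSym).prod

/-- `z_μ = ∏ μᵢ ⋅ ∏_k m_k!`. -/
def zstat {n : ℕ} (μ : n.Partition) : ℚ :=
  (μ.parts.prod : ℕ) * ∏ k ∈ μ.parts.toFinset, (Nat.factorial (μ.parts.count k))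

/-- The complete homogeneous symmetric function `h_n = Σ_{μ⊢n} p_μ / z_μ`. -/
def hSym (n : ℕ) : SymF := ∑ μ : n.Partition, ((zstat μ : F))⁻¹ • pProd μ

/-- The elementary symmetric function `e_n = Σ_{μ⊢n} (-1)^{n-ℓ(μ)} p_μ / z_μ`. -/
def eSym (n : ℕ) : SymF :=
  ∑ μ : n.Partition, ((-1 : F) ^ (n - Multiset.card μ.parts) * (zstat μ : F)⁻¹) • pProd μ

/-- `h_m` for an integer index, vanishing for negative `m`. -/
def hZ (m : ℤ) : SymF := if m < 0 then 0 else hSym m.toNat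

/-- The Schur function of a (weakly decreasing) list of parts, via the Jacobi–Trudi
determinant `s_λ = det(h_{λ_i - i + j})`. -/
def schurOf (l : List ℕ) : SymF :=
  Matrix.det (Matrix.of fun i j : Fin l.length => hZ ((l.get i : ℤ) - (i : ℤ) + (j : ℤ)))

/-- The Schur function of a partition. -/
def schur {n : ℕ} (μ : n.Partition) : SymF := schurOf (μ.parts.sort (· ≥ ·))

/-- `i`-th row length (0-indexed) of the partition `μ`. -/
def rowLen {n : ℕ} (μ : n.Partition) (i : ℕ) : ℕ := (μ.parts.sort (· ≥ ·)).getD i 0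

/-- `j`-th column length (0-indexed) of `μ`, i.e. the row lengths of the conjugate. -/
def colLen {n : ℕ} (μ : n.Partition) (j : ℕ) : ℕ :=
  ((Finset.range n).filter fun i => j < rowLen μ i).card

/-- The cells of the (French) Ferrers diagram of `μ`, as pairs
`(row, column) = (coleg, coarm)`, 0-indexed. -/
def cells {n : ℕ} (μ : n.Partition) : Finset (ℕ × ℕ) :=
  (Finset.range n ×ˢ Finset.range n).filter fun c => c.2 < rowLen μ c.1

def armLen {n : ℕ} (μ : n.Partition) (c : ℕ × ℕ) : ℕ := rowLen μ c.1 - c.2 - 1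
def legLen {n : ℕ} (μ : n.Partition) (c : ℕ × ℕ) : ℕ := colLen μ c.2 - c.1 - 1

/-- `B_μ(q^k, t^k) = Σ_{c∈μ} t^{k l'(c)} q^{k a'(c)}`. -/
def Bmu {n : ℕ} (μ : n.Partition) (k : ℕ) : F :=
  ∑ c ∈ cells μ, t ^ (k * c.1) * q ^ (k * c.2)

/-- `M` evaluated with `q,t` raised to the `k`-th power: `(1-t^k)(1-q^k)`. -/
def Mk (k : ℕ) : F := (1 - t ^ k) * (1 - q ^ k)

/-- `n(μ) = Σ_c l'(c)`. -/
def nstat {n : ℕ} (μ : n.Partition) : ℕ := ∑ c ∈ cells μ, c.1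
/-- `n(μ') = Σ_c a'(c)`. -/
def nstat' {n : ℕ} (μ : n.Partition) : ℕ := ∑ c ∈ cells μ, c.2

/-- `T_μ = t^{n(μ)} q^{n(μ')}`. -/
def Tstat {n : ℕ} (μ : n.Partition) : F := t ^ nstat μ * q ^ nstat' μ

/-- `Π_μ = ∏_{c∈μ, c≠(0,0)} (1 - t^{l'} q^{a'})`. -/
def PiStat {n : ℕ} (μ : n.Partition) : F :=
  ∏ c ∈ (cells μ).erase (0, 0), (1 - t ^ c.1 * q ^ c.2)

/-- `w_μ = ∏_{c∈μ} (q^a - t^{l+1})(t^l - q^{a+1})`. -/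
def wstat {n : ℕ} (μ : n.Partition) : F :=
  ∏ c ∈ cells μ, (q ^ armLen μ c - t ^ (legLen μ c + 1)) *
    (t ^ legLen μ c - q ^ (armLen μ c + 1))

/-- Plethysm `F[cX]`, rescaling each power sum: `p_k ↦ c(k)·p_k`. -/
def plethMul (c : ℕ → F) : SymF →ₐ[F] SymF :=
  aeval (fun i => c (i + 1) • (X i : SymF))

/-- Plethystic evaluation sending each `p_k` to `c k` in an `F`-algebra `A`. -/
def plethEval {A : Type*} [CommRing A] [Algebra F A] (c : ℕ → A) : SymF →ₐ[F] A :=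
  aeval (fun i => c (i + 1))

/-- The fundamental involution `ω : p_k ↦ (-1)^{k-1} p_k`. -/
def omegaSym : SymF →ₐ[F] SymF := plethMul (fun k => (-1 : F) ^ (k - 1))

/-- `z`-statistic of a power-sum monomial `d` (where `d i` is the exponent of `p_{i+1}`). -/
def zMon (d : ℕ →₀ ℕ) : F :=
  ∏ k ∈ d.support, ((k + 1 : ℕ) : F) ^ d k * (Nat.factorial (d k) : F)

/-- The Hall scalar product, `⟨p_λ, p_μ⟩ = z_μ δ_{λμ}`. -/
def hall (f g : SymF) : F := ∑ d ∈ f.support, coeff d f * coeff d g * zMon d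

/-- The star-deformation factor for a power-sum monomial. -/
def zMonStar (d : ℕ →₀ ℕ) : F :=
  (-1 : F) ^ (∑ k ∈ d.support, k * d k) *
    ∏ k ∈ d.support, ((1 - t ^ (k + 1)) * (1 - q ^ (k + 1))) ^ d k * zMon d

/-- The star scalar product
`⟨p_λ, p_μ⟩_* = (-1)^{|μ|-ℓ(μ)} ∏ (1-t^{μ_i})(1-q^{μ_i}) z_μ δ_{λμ}`. -/
def starP (f g : SymF) : F := ∑ d ∈ f.support, coeff d f * coeff d g * zMonStar d

/-- Dominance order: `ν ⊴ λ` (`λ` dominates `ν`). -/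
def Dominates {n : ℕ} (ν lam : n.Partition) : Prop :=
  ∀ i, ∑ j ∈ Finset.range i, rowLen ν j ≤ ∑ j ∈ Finset.range i, rowLen lam j

/-- `λ` dominates the conjugate of `μ`. -/
def DominatesConj {n : ℕ} (μ lam : n.Partition) : Prop :=
  ∀ i, ∑ j ∈ Finset.range i, colLen μ j ≤ ∑ j ∈ Finset.range i, rowLen lam j

open Classical in
/-- The defining axioms of the modified Macdonald basis `{H̃_μ}_{μ⊢n}`:
`H̃_μ[X(q-1)] ∈ span{s_λ : λ ⪰ μ}`, `H̃_μ[X(t-1)] ∈ span{s_λ : λ ⪰ μ'}`, and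
`⟨H̃_μ, s_{(n)}⟩ = 1`. -/
def MacAxioms (n : ℕ) (H : n.Partition → SymF) : Prop :=
  ∀ μ : n.Partition,
    (∃ c : n.Partition → F,
      plethMul (fun k => q ^ k - 1) (H μ) =
        ∑ lam : n.Partition, (if Dominates μ lam then c lam else 0) • schur lam) ∧
    (∃ c : n.Partition → F,
      plethMul (fun k => t ^ k - 1) (H μ) =
        ∑ lam : n.Partition, (if DominatesConj μ lam then c lam else 0) • schur lam) ∧
    hall (H μ) (hSym n) = 1

open Classical in
/-- The modified Macdonald polynomial `H̃_μ[X;q,t]`. -/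
def Htilde (n : ℕ) : n.Partition → SymF :=
  if h : ∃ H : n.Partition → SymF, MacAxioms n H then h.choose else fun _ => 0

/-- The Macdonald eigenoperator `Δ_G`, acting on the homogeneous component of
degree `n` (`Δ_G H̃_μ = G[B_μ] H̃_μ`, extended using the `H̃`-expansion computed
via the star scalar product). -/
def Delta (G : SymF) (n : ℕ) (P : SymF) : SymF :=
  ∑ μ : n.Partition,
    (starP P (Htilde n μ) / wstat μ) •
      ((plethEval (fun k => Bmu μ k) G : F) • Htilde n μ)

/-- Weighted (plethystic) degree of a symmetric function. -/
def wdeg (G : SymF) : ℕ := weightedTotalDegree (fun i => i + 1) G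

/-- `G[X - c·y] ∈ Λ[y]`, where `p_k[X - c·y] = p_k - c_k y^k`. -/
def subY (c : ℕ → F) : SymF →ₐ[F] Polynomial SymF :=
  aeval (fun i => Polynomial.C (X i : SymF) -
    (algebraMap F (Polynomial SymF) (c (i + 1))) * Polynomial.X ^ (i + 1))

/-- The operator `C_a`:
`C_a G = (-1/q)^{a-1} G[X - (1-1/q)/z] Σ_m z^m h_m[X] |_{z^a}`. -/
def Cop (a : ℕ) (G : SymF) : SymF :=
  (-q⁻¹) ^ (a - 1) •
    ∑ j ∈ Finset.range (wdeg G + 1),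
      Polynomial.coeff (subY (fun k => 1 - (q⁻¹) ^ k) G) j * hSym (a + j)

/-- The operator `B̃_a`: `B̃_a G = G[X - (1-q)/z] Ω[zX] |_{z^a}`. -/
def Btilde (a : ℕ) (G : SymF) : SymF :=
  ∑ j ∈ Finset.range (wdeg G + 1),
    Polynomial.coeff (subY (fun k => 1 - q ^ k) G) j * hSym (a + j)

/-- The operator `B_a = ω B̃_a ω`. -/
def Bop (a : ℕ) (G : SymF) : SymF := omegaSym (Btilde a (omegaSym G))

/-- `C_{p_1} C_{p_2} ⋯ C_{p_k} 1`. -/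
def CWord (p : List ℕ) : SymF := p.foldr Cop 1

/-- The star-adjoint `C*_a P = (-1/q)^{a-1} P[X - εM/z] Ω[-εzX/(q(1-t))]|_{z^{-a}}`. -/
def Cstar (a : ℕ) (P : SymF) : SymF :=
  (-q⁻¹) ^ (a - 1) •
    ∑ m ∈ Finset.range (wdeg P + 1),
      Polynomial.coeff (subY (fun k => (-1 : F) ^ k * Mk k) P) (a + m) *
        plethMul (fun k => (-1 : F) ^ (k - 1) * (q ^ k * (1 - t ^ k))⁻¹) (hSym m)

/-- The star-adjoint `B*_a P = P[X + M/z] Ω[-zX/(1-t)]|_{z^{-a}}`. -/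
def Bstar (a : ℕ) (P : SymF) : SymF :=
  ∑ m ∈ Finset.range (wdeg P + 1),
    Polynomial.coeff (subY (fun k => -Mk k) P) (a + m) *
      plethMul (fun k => -(1 - t ^ k)⁻¹) (hSym m)

/-!
The pairing `f ↦ ⟨f, e_n⟩` is the coefficient of `z^n` in the one-variable specialization
`(ωf)(z)`, `p_k ↦ (-1)^{k-1} z^k`. Newton's identity `N h_N = Σ_k p_k h_{N-k}` shows that it
sends `h_0 ↦ 1`, `h_1 ↦ z` and `h_N ↦ 0` for `N ≥ 2`. Hence, by Jacobi–Trudi, `s_λ ↦ z^m` if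
`λ = (1^m)` and `s_λ ↦ 0` otherwise; and `C_a G`, a combination of the `h_{a+j}` with `a ≥ 1`,
survives only for `a = 1`, `j = 0`, where it is `G ⋅ h_1 ↦ (ωG)(z) ⋅ z`.
-/

open Finset

lemma prod_map_pow_pred {M : Type*} [CommMonoid M] (r : M) {s : Multiset ℕ}
    (hs : ∀ k ∈ s, 1 ≤ k) :
    (s.map fun k => r ^ (k - 1)).prod = r ^ (s.sum - Multiset.card s) := by
  induction s using Multiset.induction_on with
  | empty => simp
  | cons a s ih =>
    have ha := hs a (Multiset.mem_cons_self a s)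
    have hs' : ∀ k ∈ s, 1 ≤ k := fun k hk => hs k (Multiset.mem_cons_of_mem hk)
    have hcard : Multiset.card s ≤ s.sum := by
      simpa using Multiset.card_nsmul_le_sum hs'
    rw [Multiset.map_cons, Multiset.prod_cons, ih hs', ← pow_add, Multiset.sum_cons,
      Multiset.card_cons]
    congr 1
    omega

lemma prod_map_pow_eq_pow_sum {M : Type*} [CommMonoid M] (b : M) (s : Multiset ℕ) :
    (s.map fun k => b ^ k).prod = b ^ s.sum := by
  induction s using Multiset.induction_on with
  | empty => simp
  | cons a s ih => rw [Multiset.map_cons, Multiset.prod_cons, Multiset.sum_cons, ih, pow_add]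

def zNat (s : Multiset ℕ) : ℕ := s.prod * ∏ j ∈ s.toFinset, (s.count j).factorial

lemma zstat_eq_zNat {n : ℕ} (μ : n.Partition) : zstat μ = zNat μ.parts := by
  simp [zstat, zNat]

lemma zstat_ne_zero {n : ℕ} (μ : n.Partition) : zstat μ ≠ 0 := by
  rw [zstat_eq_zNat, Nat.cast_ne_zero]
  exact Nat.mul_ne_zero (Multiset.prod_ne_zero fun h => (μ.parts_pos h).ne rfl)
    (Finset.prod_ne_zero_iff.mpr fun j _ => Nat.factorial_ne_zero _)

lemma prod_factorial_count_cons (k : ℕ) (s : Multiset ℕ) :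
    ∏ j ∈ (k ::ₘ s).toFinset, ((k ::ₘ s).count j).factorial
      = (s.count k + 1) * ∏ j ∈ s.toFinset, (s.count j).factorial := by
  classical
  set T := (k ::ₘ s).toFinset
  have hk : k ∈ T := Multiset.mem_toFinset.mpr (Multiset.mem_cons_self k s)
  have hs : ∏ j ∈ s.toFinset, (s.count j).factorial = ∏ j ∈ T, (s.count j).factorial := by
    refine Finset.prod_subset (fun j hj => ?_) fun j _ hj => ?_
    · exact Multiset.mem_toFinset.mpr (Multiset.mem_cons_of_mem (Multiset.mem_toFinset.mp hj))
    · rw [Multiset.count_eq_zero_of_notMem (by simpa using hj), Nat.factorial_zero]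
  have herase : ∀ j ∈ T.erase k, ((k ::ₘ s).count j).factorial = (s.count j).factorial :=
    fun j hj => by rw [Multiset.count_cons_of_ne (Finset.ne_of_mem_erase hj)]
  rw [hs, ← Finset.mul_prod_erase _ _ hk, ← Finset.mul_prod_erase _ _ hk,
    Finset.prod_congr rfl herase, Multiset.count_cons_self, Nat.factorial_succ, mul_assoc]

lemma zNat_cons (k : ℕ) (s : Multiset ℕ) :
    zNat (k ::ₘ s) = k * (k ::ₘ s).count k * zNat s := by
  rw [zNat, zNat, Multiset.prod_cons, prod_factorial_count_cons, Multiset.count_cons_self]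
  ring

lemma zstat_eq_of_parts_eq_cons {N M k : ℕ} {μ : N.Partition} {ν : M.Partition}
    (h : μ.parts = k ::ₘ ν.parts) : zstat μ = k * μ.parts.count k * zstat ν := by
  rw [zstat_eq_zNat, zstat_eq_zNat, h, zNat_cons]
  push_cast
  ring

lemma sum_count_mul_eq {N : ℕ} (μ : N.Partition) : ∑ k ∈ Icc 1 N, μ.parts.count k * k = N :=
  (Finset.mem_finsuppAntidiag.mp μ.toFinsuppAntidiag_mem_finsuppAntidiag).1

section HEval

variable {K : Type*} [Field K]

/-- The specialization of `h_M = Σ_{μ ⊢ M} p_μ / z_μ` at `p_k ↦ x k`. -/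
def hEval (x : ℕ → K) (M : ℕ) : K := ∑ μ : M.Partition, (μ.parts.map x).prod / zstat μ

lemma hEval_zero (x : ℕ → K) : hEval x 0 = 1 := by
  simp [hEval, zstat]

/-- Newton's identity `N h_N = Σ_k p_k h_{N-k}`. -/
lemma natCast_mul_hEval [CharZero K] (x : ℕ → K) (N : ℕ) :
    (N : K) * hEval x N = ∑ k ∈ Icc 1 N, x k * hEval x (N - k) := by
  set w : {M : ℕ} → M.Partition → K := fun μ => (μ.parts.map x).prod / zstat μ
  have remove_part : ∀ k (hk1 : 1 ≤ k) (hk : k ≤ N) (μ : {μ : N.Partition // k ∈ μ.parts}),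
      (μ.1.parts.count k * k : K) * w μ.1
        = x k * w (Nat.Partition.partitionWithPartEquiv hk1 hk μ) := by
    intro k hk1 hk μ
    set ν := Nat.Partition.partitionWithPartEquiv hk1 hk μ
    have hparts : μ.1.parts = k ::ₘ ν.parts := by
      rw [Nat.Partition.partitionWithPartEquiv_apply_parts, Multiset.cons_erase μ.2]
    have hcount : (μ.1.parts.count k : K) ≠ 0 := by
      exact_mod_cast (Multiset.count_pos.mpr μ.2).ne'
    have hk0 : (k : K) ≠ 0 := by exact_mod_cast (Nat.one_le_iff_ne_zero.mp hk1)
    have hz : (zstat ν : K) ≠ 0 := by exact_mod_cast zstat_ne_zero ν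
    simp only [w, zstat_eq_of_parts_eq_cons hparts, hparts, Multiset.map_cons, Multiset.prod_cons]
    rw [← hparts]
    push_cast
    field_simp
  calc (N : K) * hEval x N
      = ∑ μ : N.Partition, ∑ k ∈ Icc 1 N, (μ.parts.count k * k : K) * w μ := by
        rw [hEval, Finset.mul_sum]
        refine Finset.sum_congr rfl fun μ _ => ?_
        rw [← Finset.sum_mul]
        congr 1
        exact_mod_cast (sum_count_mul_eq μ).symm
    _ = ∑ k ∈ Icc 1 N, ∑ μ : {μ : N.Partition // k ∈ μ.parts},
          (μ.1.parts.count k * k : K) * w μ.1 := by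
        rw [Finset.sum_comm]
        refine Finset.sum_congr rfl fun k _ => ?_
        rw [← Finset.sum_filter_of_ne (p := fun μ : N.Partition => k ∈ μ.parts)]
        · exact Finset.sum_subtype _ (by simp) _
        · intro μ _ h
          contrapose! h
          simp [Multiset.count_eq_zero_of_notMem h]
    _ = ∑ k ∈ Icc 1 N, x k * hEval x (N - k) := by
        refine Finset.sum_congr rfl fun k hk => ?_
        obtain ⟨hk1, hkN⟩ := Finset.mem_Icc.mp hk
        rw [Finset.sum_congr rfl fun μ _ => remove_part k hk1 hkN μ,
          Equiv.sum_comp (Nat.Partition.partitionWithPartEquiv hk1 hkN) (fun ν => x k * w ν),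
          hEval, Finset.mul_sum]

lemma hEval_neg_one_pow_pred [CharZero K] (N : ℕ) :
    hEval (fun k => (-1 : K) ^ (k - 1)) N = if N ≤ 1 then 1 else 0 := by
  set x : ℕ → K := fun k => (-1) ^ (k - 1)
  induction N using Nat.strong_induction_on with
  | _ N ih =>
  match N with
  | 0 => simp [hEval_zero]
  | 1 => simpa [hEval_zero, x] using natCast_mul_hEval x 1
  | N + 2 =>
    have hlow : ∑ k ∈ Icc 1 N, x k * hEval x (N + 2 - k) = 0 :=
      Finset.sum_eq_zero fun k hk => by
        obtain ⟨hk1, hkN⟩ := Finset.mem_Icc.mp hk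
        rw [ih _ (by omega), if_neg (by omega), mul_zero]
    have h := natCast_mul_hEval x (N + 2)
    rw [Finset.sum_Icc_succ_top (by omega), Finset.sum_Icc_succ_top (by omega), hlow,
      show N + 2 - (N + 1) = 1 by omega, show N + 2 - (N + 1 + 1) = 0 by omega,
      ih 1 (by omega), ih 0 (by omega)] at h
    have hN : (N : K) + 2 ≠ 0 := by exact_mod_cast (N + 1).succ_ne_zero
    simpa [x, pow_succ, hN] using h

end HEval

/-- The exponent vector of `p_μ`; the part `k` is the variable `k - 1` of `SymF`. -/
def pExponent {n : ℕ} (μ : n.Partition) : ℕ →₀ ℕ := Multiset.toFinsupp (μ.parts.map (· - 1))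

lemma map_succ_map_pred_parts {n : ℕ} (μ : n.Partition) :
    (μ.parts.map (· - 1)).map (· + 1) = μ.parts := by
  rw [Multiset.map_map]
  conv_rhs => rw [← Multiset.map_id μ.parts]
  exact Multiset.map_congr rfl fun k hk => Nat.sub_add_cancel (μ.parts_pos hk)

lemma parts_eq_of_pExponent_eq {N n : ℕ} {μ : N.Partition} {ν : n.Partition}
    (h : pExponent μ = pExponent ν) : μ.parts = ν.parts := by
  rw [← map_succ_map_pred_parts μ, ← map_succ_map_pred_parts ν,
    Multiset.toFinsupp.injective h]

lemma exists_pExponent_eq (d : ℕ →₀ ℕ) : ∃ (N : ℕ) (μ : N.Partition), pExponent μ = d := by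
  refine ⟨_, Nat.Partition.ofMultiset ((Finsupp.toMultiset d).map (· + 1)), ?_⟩
  have hparts : (Nat.Partition.ofMultiset ((Finsupp.toMultiset d).map (· + 1))).parts
      = (Finsupp.toMultiset d).map (· + 1) :=
    Multiset.filter_eq_self.mpr fun k hk => by
      obtain ⟨j, -, rfl⟩ := Multiset.mem_map.mp hk
      exact j.succ_ne_zero
  rw [pExponent, hparts, Multiset.map_map]
  simp

lemma pProd_eq_monomial {n : ℕ} (μ : n.Partition) : pProd μ = monomial (pExponent μ) 1 := by
  rw [pProd, pExponent]
  induction μ.parts using Multiset.induction_on with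
  | empty => simp
  | cons a s ih =>
    rw [Multiset.map_cons, Multiset.prod_cons, ih, Multiset.map_cons, ← Multiset.singleton_add,
      Multiset.toFinsupp_add, Multiset.toFinsupp_singleton, pSym, X, monomial_mul, one_mul]

lemma zMon_toFinsupp (s : Multiset ℕ) : zMon (Multiset.toFinsupp s) = zNat (s.map (· + 1)) := by
  classical
  have hinj : Function.Injective (· + 1 : ℕ → ℕ) := add_left_injective 1
  have hcount : ∀ k, (s.map (· + 1)).count (k + 1) = s.count k :=
    fun k => Multiset.count_map_eq_count' _ _ hinj k
  rw [zMon, zNat, Multiset.toFinset_map, Finset.prod_image fun a _ b _ h => hinj h,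
    Finset.prod_multiset_map_count, Multiset.toFinsupp_support]
  simp only [Multiset.toFinsupp_apply, hcount]
  push_cast
  rw [Finset.prod_mul_distrib]

lemma zMon_pExponent {n : ℕ} (μ : n.Partition) : zMon (pExponent μ) = zstat μ := by
  rw [pExponent, zMon_toFinsupp, map_succ_map_pred_parts, zstat_eq_zNat, Rat.cast_natCast]

lemma coeff_pExponent_eSym {N n : ℕ} (μ : N.Partition) :
    coeff (pExponent μ) (eSym n)
      = if N = n then (-1 : F) ^ (n - Multiset.card μ.parts) * (zstat μ : F)⁻¹ else 0 := by
  simp only [eSym, coeff_sum, coeff_smul, pProd_eq_monomial, coeff_monomial, smul_eq_mul,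
    mul_ite, mul_one, mul_zero]
  split_ifs with hN
  · subst hN
    rw [Finset.sum_eq_single μ (fun ν _ hν => if_neg fun h =>
      hν (Nat.Partition.ext (parts_eq_of_pExponent_eq h))) (by simp), if_pos rfl]
  · refine Finset.sum_eq_zero fun ν _ => if_neg fun h => hN ?_
    rw [← μ.parts_sum, ← ν.parts_sum, parts_eq_of_pExponent_eq h]

lemma hall_eq_sum_of_support_subset {f : SymF} {s : Finset (ℕ →₀ ℕ)} (hs : f.support ⊆ s)
    (g : SymF) : hall f g = ∑ d ∈ s, coeff d f * coeff d g * zMon d :=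
  Finset.sum_subset hs fun d _ hd => by rw [notMem_support_iff.mp hd, zero_mul, zero_mul]

lemma hall_monomial_left (d : ℕ →₀ ℕ) (a : F) (g : SymF) :
    hall (monomial d a) g = a * coeff d g * zMon d := by
  rw [hall_eq_sum_of_support_subset support_monomial_subset, Finset.sum_singleton,
    coeff_monomial, if_pos rfl]

lemma hall_add_left (f f' g : SymF) : hall (f + f') g = hall f g + hall f' g := by
  classical
  rw [hall_eq_sum_of_support_subset support_add,
    hall_eq_sum_of_support_subset (Finset.subset_union_left (s₂ := f'.support)),
    hall_eq_sum_of_support_subset (Finset.subset_union_right (s₁ := f.support)),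
    ← Finset.sum_add_distrib]
  simp only [coeff_add, add_mul]

/-- The one-variable specialization `f ↦ (ω f)(z)`, i.e. `p_k ↦ (-1)^{k-1} z^k`. -/
def zSpec : SymF →ₐ[F] Polynomial F :=
  aeval fun i => Polynomial.C ((-1 : F) ^ i) * Polynomial.X ^ (i + 1)

lemma zSpec_pProd {n : ℕ} (μ : n.Partition) :
    zSpec (pProd μ) = Polynomial.C ((-1 : F) ^ (n - Multiset.card μ.parts)) * Polynomial.X ^ n := by
  have hp : ∀ k ∈ μ.parts, zSpec (pSym k) = Polynomial.C ((-1 : F) ^ (k - 1)) * Polynomial.X ^ k :=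
    fun k hk => by rw [pSym, zSpec, aeval_X, Nat.sub_add_cancel (μ.parts_pos hk)]
  rw [pProd, map_multiset_prod, Multiset.map_map,
    Multiset.map_congr rfl (f := zSpec ∘ pSym) hp,
    Multiset.prod_map_mul, prod_map_pow_eq_pow_sum, μ.parts_sum]
  have hsign := prod_map_pow_pred (-1 : F) fun k (hk : k ∈ μ.parts) => μ.parts_pos hk
  rw [μ.parts_sum] at hsign
  rw [← hsign, map_multiset_prod, Multiset.map_map]
  rfl

lemma hall_eSym_eq_coeff_zSpec (f : SymF) (n : ℕ) : hall f (eSym n) = (zSpec f).coeff n := by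
  induction f using MvPolynomial.induction_on' with
  | monomial d a =>
    obtain ⟨N, μ, rfl⟩ := exists_pExponent_eq d
    have hz : (zstat μ : F) ≠ 0 := by exact_mod_cast zstat_ne_zero μ
    have hmono : monomial (pExponent μ) a = a • pProd μ := by
      rw [pProd_eq_monomial, smul_monomial, smul_eq_mul, mul_one]
    rw [hall_monomial_left, coeff_pExponent_eSym, zMon_pExponent, hmono, map_smul, zSpec_pProd,
      Polynomial.coeff_smul, Polynomial.coeff_C_mul_X_pow]
    obtain rfl | hN := eq_or_ne N n
    · rw [if_pos rfl, if_pos rfl, smul_eq_mul]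
      field_simp
    · simp [hN, hN.symm]
  | add f f' hf hf' => rw [hall_add_left, hf, hf', map_add, Polynomial.coeff_add]

lemma zSpec_hSym (N : ℕ) : zSpec (hSym N) = if N ≤ 1 then Polynomial.X ^ N else 0 := by
  have hsum : zSpec (hSym N)
      = Polynomial.C (hEval (fun k => (-1 : F) ^ (k - 1)) N) * Polynomial.X ^ N := by
    rw [hSym, map_sum, hEval, map_sum, Finset.sum_mul]
    refine Finset.sum_congr rfl fun μ _ => ?_
    rw [map_smul, zSpec_pProd, prod_map_pow_pred _ fun k hk => μ.parts_pos hk, μ.parts_sum,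
      Polynomial.smul_eq_C_mul, ← mul_assoc, ← Polynomial.C_mul, div_eq_inv_mul]
  rw [hsum, hEval_neg_one_pow_pred]
  split_ifs <;> simp

lemma zSpec_hZ (e : ℤ) :
    zSpec (hZ e) = if e = 0 then 1 else if e = 1 then Polynomial.X else 0 := by
  rw [hZ]
  by_cases hneg : e < 0
  · rw [if_pos hneg, map_zero, if_neg (by omega), if_neg (by omega)]
  · lift e to ℕ using not_lt.mp hneg
    rw [if_neg hneg, zSpec_hSym, Int.toNat_natCast]
    rcases e with _ | _ | e
    · simp
    · simp
    · rw [if_neg (by omega), if_neg (by omega), if_neg (by omega)]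

lemma zSpec_schurOf (l : List ℕ) :
    zSpec (schurOf l) = (Matrix.of fun i j : Fin l.length =>
      zSpec (hZ ((l.get i : ℤ) - (i : ℤ) + (j : ℤ)))).det := by
  rw [schurOf, AlgHom.map_det]
  rfl

lemma zSpec_schurOf_replicate_one (m : ℕ) :
    zSpec (schurOf (List.replicate m 1)) = Polynomial.X ^ m := by
  rw [zSpec_schurOf, Matrix.det_of_isLowerTriangular]
  · simp [zSpec_hZ]
  · intro i j hij
    have : (i : ℕ) < j := hij
    simp only [Matrix.of_apply, List.get_eq_getElem, List.getElem_replicate, zSpec_hZ]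
    rw [if_neg (by omega), if_neg (by omega)]

lemma zSpec_schurOf_eq_zero {l : List ℕ} (hl : l.Pairwise (· ≥ ·)) {k : ℕ} (hk : k ∈ l)
    (hk2 : 2 ≤ k) : zSpec (schurOf l) = 0 := by
  obtain _ | ⟨a, l⟩ := l
  · simp at hk
  have ha : 2 ≤ a := by
    rcases List.mem_cons.mp hk with rfl | hk
    · exact hk2
    · exact hk2.trans (List.rel_of_pairwise_cons hl hk)
  rw [zSpec_schurOf]
  refine Matrix.det_eq_zero_of_row_eq_zero 0 fun j => ?_
  simp only [Matrix.of_apply, zSpec_hZ]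
  rw [if_neg (by simp; omega), if_neg (by simp; omega)]

lemma Nat.Partition.parts_eq_replicate_one {m : ℕ} (lam : m.Partition)
    (h : ∀ k ∈ lam.parts, k ≤ 1) : lam.parts = Multiset.replicate m 1 := by
  have hone : ∀ k ∈ lam.parts, k = 1 := fun k hk => by
    have := lam.parts_pos hk
    have := h k hk
    omega
  have hsum := lam.parts_sum
  rw [Multiset.eq_replicate_card.mpr hone, Multiset.sum_replicate, smul_eq_mul, mul_one] at hsum
  rw [Multiset.eq_replicate_card.mpr hone, hsum]

lemma zSpec_schur {m : ℕ} (lam : m.Partition) :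
    zSpec (schur lam) = if lam.parts = Multiset.replicate m 1 then Polynomial.X ^ m else 0 := by
  rw [schur]
  split_ifs with h
  · have hsort : lam.parts.sort (· ≥ ·) = List.replicate m 1 :=
      List.eq_replicate_iff.mpr ⟨by rw [Multiset.length_sort, h, Multiset.card_replicate],
        fun b hb => Multiset.eq_of_mem_replicate (h ▸ (Multiset.mem_sort _).mp hb)⟩
    rw [hsort, zSpec_schurOf_replicate_one]
  · obtain ⟨k, hk, hk2⟩ : ∃ k ∈ lam.parts, 2 ≤ k := by
      by_contra! hno
      exact h (lam.parts_eq_replicate_one fun k hk => Nat.lt_succ_iff.mp (hno k hk))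
    exact zSpec_schurOf_eq_zero (Multiset.pairwise_sort _ _) ((Multiset.mem_sort _).mpr hk) hk2

lemma coeff_zero_subY (c : ℕ → F) (f : SymF) : (subY c f).coeff 0 = f := by
  have hid : (Polynomial.evalRingHom 0).comp (subY c).toRingHom = RingHom.id SymF :=
    MvPolynomial.ringHom_ext (fun a => by simp [subY]) fun i => by simp [subY]
  rw [Polynomial.coeff_zero_eq_eval_zero]
  exact DFunLike.congr_fun hid f

lemma zSpec_Cop {a : ℕ} (ha : 1 ≤ a) (G : SymF) :
    zSpec (Cop a G) = if a = 1 then zSpec G * Polynomial.X else 0 := by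
  simp only [Cop, map_smul, map_sum, map_mul, zSpec_hSym]
  split_ifs with ha1
  · subst ha1
    rw [Finset.sum_eq_single 0 (fun j _ hj => by rw [if_neg (by omega), mul_zero]) (by simp),
      if_pos le_rfl, coeff_zero_subY, pow_zero, one_smul, pow_one]
  · rw [Finset.sum_eq_zero fun j _ => by rw [if_neg (by omega), mul_zero], smul_zero]

open Classical in
/-- for `a ≥ 1` and a partition `λ` with `a + |λ| = n`,
`⟨C_a s_λ, e_n⟩ = 1` if `a = 1` and `λ = (1^{n-1})`, and `0` otherwise. -/
theorem Cop_schur_pairing (a m : ℕ) (ha : 1 ≤ a) (lam : m.Partition) :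
    hall (Cop a (schur lam)) (eSym (a + m)) =
      (if a = 1 ∧ lam.parts = Multiset.replicate (a + m - 1) 1 then 1 else 0) := by
  rw [hall_eSym_eq_coeff_zSpec, zSpec_Cop ha]
  obtain rfl | ha1 := eq_or_ne a 1
  · rw [if_pos rfl, zSpec_schur, add_comm 1 m, Polynomial.coeff_mul_X, Nat.add_sub_cancel]
    split_ifs <;> simp_all
  · simp [ha1]

end
end

section
/- Let PF be a parking function on the (J+n)×(J+n) lattice square whose diagonal word is a shuffle of the words 12⋯J and (J+1)(J+2)⋯(J+n). Then every column of the Dyck path supporting PF has length at most 2, and any column of length 2 consists of a small car (≤ J) with a big car (> J) directly above it. -/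
/-- A parking function on the `N × N` lattice square, encoded by its two-line
array: cars `v` (a bijection onto `{1,…,N}`) and area numbers `u`. -/
structure ParkingFunction (N : ℕ) where
  u : Fin N → ℕ
  v : Fin N → ℕ
  u_first : ∀ h : 0 < N, u ⟨0, h⟩ = 0
  u_step : ∀ i : Fin N, ∀ h : (i : ℕ) + 1 < N, u ⟨(i : ℕ) + 1, h⟩ ≤ u i + 1
  v_incr : ∀ i : Fin N, ∀ h : (i : ℕ) + 1 < N,
    u ⟨(i : ℕ) + 1, h⟩ = u i + 1 → v i < v ⟨(i : ℕ) + 1, h⟩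
  v_mem : ∀ i, v i ∈ Finset.Icc 1 N
  v_inj : Function.Injective v

/-- The diagonal word of a parking function: read cars by diagonals, from the
highest diagonal down to the main diagonal, from right to left within each
diagonal. -/
def ParkingFunction.diagWord {N : ℕ} (PF : ParkingFunction N) : List ℕ :=
  ((List.range N).reverse).flatMap fun d =>
    (((List.finRange N).filter fun i => PF.u i = d).reverse).map PF.v

/-- `IsShuffle w₁ w₂ w` means `w` is a shuffle (interleaving) of `w₁` and `w₂`. -/
inductive IsShuffle : List ℕ → List ℕ → List ℕ → Prop
  | nil : IsShuffle [] [] []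
  | left {a b c x} : IsShuffle a b c → IsShuffle (x :: a) b (x :: c)
  | right {a b c x} : IsShuffle a b c → IsShuffle a (x :: b) (x :: c)

/-- The column (abscissa) of the `i`-th car of a parking function. -/
def ParkingFunction.col {N : ℕ} (PF : ParkingFunction N) (i : Fin N) : ℕ :=
  (i : ℕ) - PF.u i

/-!
Two cars `i < j` in one column sit on consecutive north steps, so `j` lies on a higher diagonal
than `i`, while cars increase up a column: the diagonal word reads the larger car `v j` before
`v i`. In a shuffle of the increasing words `1⋯J` and `(J+1)⋯(J+n)` such an inversion pairs a big
car with a small one, so `v i ≤ J < v j`. Hence a column holds at most one small and one big car.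
-/

open List

namespace IsShuffle

variable {a b w : List ℕ}

theorem swap (h : IsShuffle a b w) : IsShuffle b a w := by
  induction h with
  | nil => exact .nil
  | left _ ih => exact ih.right
  | right _ ih => exact ih.left

theorem filter_eq_left (h : IsShuffle a b w) {p : ℕ → Bool} (ha : ∀ x ∈ a, p x)
    (hb : ∀ x ∈ b, p x = false) : w.filter p = a := by
  induction h with
  | nil => rfl
  | left _ ih =>
    simp only [mem_cons, forall_eq_or_imp] at ha
    rw [filter_cons_of_pos ha.1, ih ha.2 hb]
  | right _ ih =>
    simp only [mem_cons, forall_eq_or_imp] at hb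
    rw [filter_cons_of_neg (by simp [hb.1]), ih ha hb.2]

theorem sublist_left_of_sublist (h : IsShuffle a b w) {p : ℕ → Bool} (ha : ∀ x ∈ a, p x)
    (hb : ∀ x ∈ b, p x = false) {s : List ℕ} (hs : s <+ w) (hps : ∀ x ∈ s, p x) : s <+ a := by
  simpa only [h.filter_eq_left ha hb, filter_eq_self.2 hps] using hs.filter p

theorem le_and_lt_of_pair_sublist {J n : ℕ} (h : IsShuffle (range' 1 J) (range' (J + 1) n) w)
    {x y : ℕ} (hxy : [x, y] <+ w) (hyx : y < x) : y ≤ J ∧ J < x := by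
  have not_increasing : ∀ l : List ℕ, l.Pairwise (· < ·) → ¬ [x, y] <+ l := fun l hl hs =>
    (rel_of_pairwise_cons (hl.sublist hs) (mem_singleton_self y)).asymm hyx
  have small : ∀ z ∈ range' 1 J, decide (z ≤ J) := fun z hz =>
    decide_eq_true (by rw [mem_range'_1] at hz; omega)
  have big : ∀ z ∈ range' (J + 1) n, decide (z ≤ J) = false := fun z hz =>
    decide_eq_false (by rw [mem_range'_1] at hz; omega)
  by_cases hx : x ≤ J
  · refine absurd (h.sublist_left_of_sublist small big hxy ?_) (not_increasing _ pairwise_lt_range')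
    simp only [mem_cons, not_mem_nil, or_false, forall_eq_or_imp, forall_eq,
      decide_eq_true_eq]
    omega
  by_cases hy : y ≤ J
  · exact ⟨hy, by omega⟩
  · refine absurd (h.swap.sublist_left_of_sublist (p := fun z => !decide (z ≤ J)) ?_ ?_ hxy ?_)
      (not_increasing _ pairwise_lt_range') <;> simp_all [mem_range'_1]

end IsShuffle

namespace ParkingFunction

variable {N : ℕ} (PF : ParkingFunction N)

theorem u_le (i : Fin N) : PF.u i ≤ i := by
  obtain ⟨k, hk⟩ := i
  induction k with
  | zero => simp [PF.u_first hk]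
  | succ k ih =>
    have hstep : PF.u ⟨k + 1, hk⟩ ≤ PF.u ⟨k, by omega⟩ + 1 := PF.u_step ⟨k, by omega⟩ hk
    have hle : PF.u ⟨k, by omega⟩ ≤ k := ih (by omega)
    exact hstep.trans (by simpa using hle)

theorem col_monotone : Monotone PF.col := by
  obtain _ | N := N
  · exact fun i => i.elim0
  rw [Fin.monotone_iff_le_succ]
  rintro ⟨i, hi⟩
  have hstep : PF.u ⟨i + 1, by omega⟩ ≤ PF.u ⟨i, by omega⟩ + 1 :=
    PF.u_step ⟨i, by omega⟩ (Nat.succ_lt_succ hi)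
  have hle : PF.u ⟨i, by omega⟩ ≤ i := PF.u_le _
  simp only [col, Fin.castSucc_mk, Fin.succ_mk]
  omega

theorem u_eq_add_of_col_eq {i j : Fin N} (hij : i ≤ j) (hcol : PF.col i = PF.col j) :
    PF.u j = PF.u i + (j - i) := by
  have := PF.u_le i
  have := PF.u_le j
  simp only [col] at hcol
  omega

theorem v_lt_of_col_eq {i j : Fin N} (hij : i < j) (hcol : PF.col i = PF.col j) :
    PF.v i < PF.v j := by
  obtain ⟨j, hj⟩ := j
  induction j with
  | zero => exact (Nat.not_lt_zero _ hij).elim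
  | succ k ih =>
    have hik : i ≤ ⟨k, by omega⟩ := Fin.le_def.2 (Nat.le_of_lt_succ hij)
    have hcolk : PF.col ⟨k, by omega⟩ = PF.col ⟨k + 1, hj⟩ :=
      le_antisymm (PF.col_monotone (Fin.le_def.2 k.le_succ)) (hcol ▸ PF.col_monotone hik)
    have hstep : PF.v ⟨k, by omega⟩ < PF.v ⟨k + 1, hj⟩ :=
      PF.v_incr _ hj (by simpa using PF.u_eq_add_of_col_eq (Fin.le_def.2 k.le_succ) hcolk)
    rcases hik.lt_or_eq with hik | hik
    · exact (ih (by omega) hik (hcol.trans hcolk.symm)).trans hstep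
    · exact hik ▸ hstep

theorem pair_sublist_diagWord_of_u_lt {i j : Fin N} (hu : PF.u i < PF.u j) :
    [PF.v j, PF.v i] <+ PF.diagWord := by
  have hdiag : [PF.u j, PF.u i] <+ (range N).reverse := by
    have hj : PF.u j < N := (PF.u_le j).trans_lt j.2
    refine sublist_of_subperm_of_pairwise (r := (· > ·)) ?_ (by simpa using hu)
      (by simpa [pairwise_reverse] using pairwise_lt_range)
    exact subperm_of_subset (by simp; omega) (by intro x hx; simp at hx ⊢; omega)
  refine Sublist.trans ?_ (hdiag.flatMap _)
  simp only [flatMap_cons, flatMap_nil, append_nil]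
  refine (singleton_sublist.2 ?_).append (singleton_sublist.2 ?_) <;> simpa using ⟨_, rfl, rfl⟩

end ParkingFunction

/-- if the diagonal word of a parking function on the
`(J+n) × (J+n)` square is a shuffle of `1⋯J` and `(J+1)⋯(J+n)`, then every
column of the supporting Dyck path has length at most 2, and whenever two cars
share a column the lower one is small (`≤ J`) and the upper one is big (`> J`). -/
theorem columns_le_two_of_shuffle (J n : ℕ) (PF : ParkingFunction (J + n))
    (hshuffle : IsShuffle (List.range' 1 J) (List.range' (J + 1) n) PF.diagWord) :
    (∀ c : ℕ, (Finset.univ.filter fun i : Fin (J + n) => PF.col i = c).card ≤ 2) ∧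
      (∀ i j : Fin (J + n), (i : ℕ) < (j : ℕ) → PF.col i = PF.col j →
        PF.v i ≤ J ∧ J < PF.v j) := by
  have small_below_big : ∀ i j : Fin (J + n), (i : ℕ) < (j : ℕ) → PF.col i = PF.col j →
      PF.v i ≤ J ∧ J < PF.v j := fun i j hij hcol =>
    hshuffle.le_and_lt_of_pair_sublist
      (PF.pair_sublist_diagWord_of_u_lt (by have := PF.u_eq_add_of_col_eq hij.le hcol; omega))
      (PF.v_lt_of_col_eq hij hcol)
  refine ⟨fun c => ?_, small_below_big⟩
  calc _ ≤ (Finset.univ : Finset Bool).card :=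
        Finset.card_le_card_of_injOn (fun i => decide (PF.v i ≤ J))
          (fun _ _ => Finset.mem_univ _) ?_
    _ = 2 := rfl
  intro i hi j hj hv
  simp only [Finset.coe_filter, Finset.mem_univ, true_and, Set.mem_ofPred_eq] at hi hj
  simp only [decide_eq_decide] at hv
  by_contra hne
  rcases Fin.lt_or_lt_of_ne hne with h | h
  · have := small_below_big i j h (hi.trans hj.symm); omega
  · have := small_below_big j i h (hj.trans hi.symm); omega
end
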